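/- Let S be an algebraic Cu-semigroup and let S_c be its submonoid of compact elements. Then: (i) S satisfies (O5) if and only if S_c is algebraically ordered, i.e., for all a, b ∈ S_c with a ≤ b there exists c ∈ S_c with a + c = b; (ii) S is weakly cancellative if and only if S_c is cancellative, i.e., for all a, b, x ∈ S_c, a + x ≤ b + x implies a ≤ b; (iii) if S_c has Riesz decomposition (for all a, b, c ∈ S_c with a ≤ b + c there exist b', c' ∈ S_c with a = b' + c', b' ≤ b and c' ≤ c), then S satisfies (O6); conversely, if S satisfies (O5) and (O6) and is weakly cancellative, then S_c has Riesz decomposition. -/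
import Mathlib


open scoped ENNReal

/-- The (sequential) way-below relation: `a ≪ b` if for every increasing
sequence `f` with a supremum `s` such that `b ≤ s`, some `f n` dominates `a`. -/
def CuWayBelow {S : Type*} [Preorder S] (a b : S) : Prop :=
  ∀ f : ℕ → S, Monotone f → ∀ s : S, IsLUB (Set.range f) s → b ≤ s → ∃ n : ℕ, a ≤ f n

/-- An abstract Cu-semigroup: a positively ordered monoid satisfying the
axioms (O1)-(O4). -/
structure IsCuSemigroup (S : Type*) [AddCommMonoid S] [PartialOrder S] : Prop where
  /-- addition is order-preserving -/
  add_le_add : ∀ a b c : S, a ≤ b → a + c ≤ b + c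
  /-- `0` is the least element -/
  zero_le : ∀ a : S, 0 ≤ a
  /-- (O1) every increasing sequence has a supremum -/
  O1 : ∀ f : ℕ → S, Monotone f → ∃ s : S, IsLUB (Set.range f) s
  /-- (O2) every element is the supremum of a rapidly increasing sequence -/
  O2 : ∀ a : S, ∃ f : ℕ → S, (∀ n : ℕ, CuWayBelow (f n) (f (n + 1))) ∧ IsLUB (Set.range f) a
  /-- (O3) way-below is additive -/
  O3 : ∀ a' a b' b : S, CuWayBelow a' a → CuWayBelow b' b → CuWayBelow (a' + b') (a + b)
  /-- (O4) suprema of increasing sequences are additive -/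
  O4 : ∀ f g : ℕ → S, Monotone f → Monotone g → ∀ s t : S, IsLUB (Set.range f) s →
    IsLUB (Set.range g) t → IsLUB (Set.range (fun n => f n + g n)) (s + t)

/-- Axiom (O5): almost algebraic order. -/
def CuO5 (S : Type*) [AddCommMonoid S] [PartialOrder S] : Prop :=
  ∀ a' a b' b c : S, a + b ≤ c → CuWayBelow a' a → CuWayBelow b' b →
    ∃ x : S, a' + x ≤ c ∧ c ≤ a + x ∧ b' ≤ x

/-- Axiom (O6): almost Riesz decomposition. -/
def CuO6 (S : Type*) [AddCommMonoid S] [PartialOrder S] : Prop :=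
  ∀ a' a b c : S, CuWayBelow a' a → a ≤ b + c →
    ∃ e f : S, a' ≤ e + f ∧ e ≤ a ∧ e ≤ b ∧ f ≤ a ∧ f ≤ c

/-- Weak cancellation: `a + x ≪ b + x` implies `a ≪ b`. -/
def CuWeaklyCancellative (S : Type*) [AddCommMonoid S] [PartialOrder S] : Prop :=
  ∀ a b x : S, CuWayBelow (a + x) (b + x) → CuWayBelow a b


section Aux

variable {S : Type*} [AddCommMonoid S] [PartialOrder S]

lemma cuwb_le {a b : S} (h : CuWayBelow a b) : a ≤ b := by
  obtain ⟨n, hn⟩ := h (fun _ => b) monotone_const b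
    (by rw [Set.range_const]; exact isLUB_singleton) le_rfl
  exact hn

lemma cuwb_mono {a b c d : S} (hab : a ≤ b) (h : CuWayBelow b c) (hcd : c ≤ d) :
    CuWayBelow a d := by
  intro f hf s hs hds
  obtain ⟨n, hn⟩ := h f hf s hs (hcd.trans hds)
  exact ⟨n, hab.trans hn⟩

lemma cuwb_zero (hS : IsCuSemigroup S) (b : S) : CuWayBelow (0 : S) b :=
  fun f _ _ _ _ => ⟨0, hS.zero_le _⟩

lemma cu_add_le_add (hS : IsCuSemigroup S) {a b c d : S} (h1 : a ≤ b) (h2 : c ≤ d) :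
    a + c ≤ b + d := by
  calc a + c ≤ b + c := hS.add_le_add _ _ _ h1
    _ = c + b := add_comm _ _
    _ ≤ d + b := hS.add_le_add _ _ _ h2
    _ = b + d := add_comm _ _

lemma cu_le_add_right (hS : IsCuSemigroup S) (a b : S) : a ≤ a + b := by
  calc a = a + 0 := (add_zero a).symm
    _ ≤ a + b := cu_add_le_add hS le_rfl (hS.zero_le b)

lemma cu_le_add_left (hS : IsCuSemigroup S) (a b : S) : a ≤ b + a := by
  rw [add_comm]; exact cu_le_add_right hS a b

lemma cu_const_isLUB (a : S) : IsLUB (Set.range fun _ : ℕ => a) a := by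
  rw [Set.range_const]; exact isLUB_singleton

lemma cu_O4_const (hS : IsCuSemigroup S) (a : S) {f : ℕ → S} (hf : Monotone f) {s : S}
    (hs : IsLUB (Set.range f) s) :
    IsLUB (Set.range fun n => a + f n) (a + s) :=
  hS.O4 (fun _ => a) f monotone_const hf a s (cu_const_isLUB a) hs

lemma cu_shift_isLUB {f : ℕ → S} (hf : Monotone f) {s : S}
    (h : IsLUB (Set.range f) s) (j : ℕ) :
    IsLUB (Set.range fun n => f (j + n)) s := by
  constructor
  · rintro _ ⟨n, rfl⟩; exact h.1 ⟨j + n, rfl⟩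
  · intro u hu
    apply h.2
    rintro _ ⟨n, rfl⟩
    exact (hf (Nat.le_add_left n j)).trans (hu ⟨n, rfl⟩)

lemma cu_exists_compact_between
    (halg : ∀ a : S, ∃ f : ℕ → S, Monotone f ∧ (∀ n : ℕ, CuWayBelow (f n) (f n)) ∧
      IsLUB (Set.range f) a) {a' a : S} (h : CuWayBelow a' a) :
    ∃ t : S, CuWayBelow t t ∧ a' ≤ t ∧ t ≤ a := by
  obtain ⟨f, hf, hcpt, hlub⟩ := halg a
  obtain ⟨n, hn⟩ := h f hf a hlub le_rfl
  exact ⟨f n, hcpt n, hn, hlub.1 ⟨n, rfl⟩⟩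

/-- (i) forward direction: O5 implies the compacts are algebraically ordered. -/
lemma cu_algOrder_of_O5 (hS : IsCuSemigroup S)
    (halg : ∀ a : S, ∃ f : ℕ → S, Monotone f ∧ (∀ n : ℕ, CuWayBelow (f n) (f n)) ∧
      IsLUB (Set.range f) a)
    (hO5 : CuO5 S) :
    ∀ a b : S, CuWayBelow a a → CuWayBelow b b → a ≤ b →
      ∃ c : S, CuWayBelow c c ∧ a + c = b := by
  intro a b ha hb hab
  obtain ⟨x, hax, hbax, -⟩ := hO5 a a 0 0 b (by simpa using hab) ha (cuwb_zero hS 0)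
  obtain ⟨g, hg, hgc, hglub⟩ := halg x
  have hmono : Monotone fun n => a + g n := fun i j hij => cu_add_le_add hS le_rfl (hg hij)
  have hx : IsLUB (Set.range fun n => a + g n) (a + x) := cu_O4_const hS a hg hglub
  obtain ⟨n, hn⟩ := hb (fun n => a + g n) hmono (a + x) hx hbax
  refine ⟨g n, hgc n, le_antisymm ?_ hn⟩
  exact (cu_add_le_add hS le_rfl (hglub.1 ⟨n, rfl⟩)).trans hax

/-- (i) backward direction: algebraically ordered compacts imply O5. -/
lemma cu_O5_of_algOrder (hS : IsCuSemigroup S)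
    (halg : ∀ a : S, ∃ f : ℕ → S, Monotone f ∧ (∀ n : ℕ, CuWayBelow (f n) (f n)) ∧
      IsLUB (Set.range f) a)
    (hord : ∀ a b : S, CuWayBelow a a → CuWayBelow b b → a ≤ b →
      ∃ c : S, CuWayBelow c c ∧ a + c = b) :
    CuO5 S := by
  intro a' a b' b c habc ha' hb'
  obtain ⟨ta, htac, ha'ta, htaa⟩ := cu_exists_compact_between halg ha'
  obtain ⟨tb, htbc, hb'tb, htbb⟩ := cu_exists_compact_between halg hb'
  obtain ⟨cs, hcs, hcsc, hcslub⟩ := halg c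
  have hsumc : CuWayBelow (ta + tb) (ta + tb) := hS.O3 _ _ _ _ htac htbc
  have h1 : ta + tb ≤ c := (cu_add_le_add hS htaa htbb).trans habc
  obtain ⟨j, hj⟩ := hsumc cs hcs c hcslub h1
  obtain ⟨d, hd, hdeq⟩ := hord (ta + tb) (cs j) hsumc (hcsc j) hj
  have he : ∀ n : ℕ, ∃ e : S, CuWayBelow e e ∧ cs (j + n) + e = cs (j + n + 1) := fun n =>
    hord _ _ (hcsc _) (hcsc _) (hcs (Nat.le_succ _))
  choose e hec heq using he
  set x : ℕ → S := fun n => (tb + d) + ∑ i ∈ Finset.range n, e i with hxdef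
  have hxsucc : ∀ n, x (n + 1) = x n + e n := by
    intro n; simp only [hxdef, Finset.sum_range_succ, add_assoc]
  have hinv : ∀ n, ta + x n = cs (j + n) := by
    intro n
    induction n with
    | zero => simpa [hxdef, ← add_assoc] using hdeq
    | succ n ih =>
        rw [hxsucc, ← add_assoc, ih, heq]
        rfl
  have hxmono : Monotone x := by
    refine monotone_nat_of_le_succ fun n => ?_
    rw [hxsucc]; exact cu_le_add_right hS _ _
  obtain ⟨xs, hxs⟩ := hS.O1 x hxmono
  have hkey : ta + xs = c := by
    have h2 : IsLUB (Set.range fun n => ta + x n) (ta + xs) := cu_O4_const hS ta hxmono hxs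
    have h3 : (fun n => ta + x n) = fun n => cs (j + n) := funext hinv
    rw [h3] at h2
    exact h2.unique (cu_shift_isLUB hcs hcslub j)
  have hx0 : tb ≤ x 0 := by
    simp only [hxdef, Finset.sum_range_zero, add_zero]
    exact cu_le_add_right hS _ _
  refine ⟨xs, ?_, ?_, ?_⟩
  · calc a' + xs ≤ ta + xs := hS.add_le_add _ _ _ ha'ta
      _ = c := hkey
  · calc c = ta + xs := hkey.symm
      _ ≤ a + xs := hS.add_le_add _ _ _ htaa
  · exact hb'tb.trans (hx0.trans (hxs.1 ⟨0, rfl⟩))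

/-- (ii) backward direction. -/
lemma cu_wc_of_cancel (hS : IsCuSemigroup S)
    (halg : ∀ a : S, ∃ f : ℕ → S, Monotone f ∧ (∀ n : ℕ, CuWayBelow (f n) (f n)) ∧
      IsLUB (Set.range f) a)
    (hcan : ∀ a b x : S, CuWayBelow a a → CuWayBelow b b → CuWayBelow x x →
      a + x ≤ b + x → a ≤ b) :
    CuWeaklyCancellative S := by
  intro a b x h f hf s hs hbs
  obtain ⟨g, hg, hgc, hgl⟩ := halg b
  obtain ⟨y, hy, hyc, hyl⟩ := halg x
  have hmono : Monotone fun n => g n + y n := fun i j hij => cu_add_le_add hS (hg hij) (hy hij)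
  have hlub : IsLUB (Set.range fun n => g n + y n) (b + x) := hS.O4 g y hg hy b x hgl hyl
  obtain ⟨k, hk⟩ := h (fun n => g n + y n) hmono (b + x) hlub le_rfl
  obtain ⟨p, hp, hpc, hpl⟩ := halg a
  have hab : a ≤ g k := by
    apply hpl.2
    rintro _ ⟨m, rfl⟩
    refine hcan (p m) (g k) (y k) (hpc m) (hgc k) (hyc k) ?_
    calc p m + y k ≤ a + x := cu_add_le_add hS (hpl.1 ⟨m, rfl⟩) (hyl.1 ⟨k, rfl⟩)
      _ ≤ g k + y k := hk
  obtain ⟨n, hn⟩ := hgc k f hf s hs ((hgl.1 ⟨k, rfl⟩).trans hbs)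
  exact ⟨n, hab.trans hn⟩

end Aux

/-- Let `S` be an algebraic Cu-semigroup and let its compact
elements be those `a` with `a ≪ a`.  Then:
(i) `S` satisfies (O5) iff the compact elements are algebraically ordered;
(ii) `S` is weakly cancellative iff the compact elements are cancellative;
(iii) if the compact elements have Riesz decomposition then `S` satisfies
(O6); conversely, if `S` satisfies (O5), (O6) and weak cancellation, then the
compact elements have Riesz decomposition. -/
theorem stmt18 {S : Type*} [AddCommMonoid S] [PartialOrder S]
    (hS : IsCuSemigroup S)
    (halg : ∀ a : S, ∃ f : ℕ → S, Monotone f ∧ (∀ n : ℕ, CuWayBelow (f n) (f n)) ∧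
      IsLUB (Set.range f) a) :
    (CuO5 S ↔ ∀ a b : S, CuWayBelow a a → CuWayBelow b b → a ≤ b →
        ∃ c : S, CuWayBelow c c ∧ a + c = b) ∧
    (CuWeaklyCancellative S ↔ ∀ a b x : S, CuWayBelow a a → CuWayBelow b b →
        CuWayBelow x x → a + x ≤ b + x → a ≤ b) ∧
    (((∀ a b c : S, CuWayBelow a a → CuWayBelow b b → CuWayBelow c c → a ≤ b + c →
          ∃ b' c' : S, CuWayBelow b' b' ∧ CuWayBelow c' c' ∧ a = b' + c' ∧ b' ≤ b ∧ c' ≤ c)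
        → CuO6 S) ∧
      ((CuO5 S ∧ CuO6 S ∧ CuWeaklyCancellative S) →
        ∀ a b c : S, CuWayBelow a a → CuWayBelow b b → CuWayBelow c c → a ≤ b + c →
          ∃ b' c' : S, CuWayBelow b' b' ∧ CuWayBelow c' c' ∧ a = b' + c' ∧ b' ≤ b ∧ c' ≤ c)) := by

  refine ⟨⟨fun hO5 => cu_algOrder_of_O5 hS halg hO5,
          fun hord => cu_O5_of_algOrder hS halg hord⟩, ⟨?_, ?_⟩, ?_, ?_⟩
  · -- weakly cancellative → compacts cancellative
    intro hwc a b x ha hb hx h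
    exact cuwb_le (hwc a b x (cuwb_mono le_rfl (hS.O3 _ _ _ _ ha hx) h))
  · exact cu_wc_of_cancel hS halg
  · -- Riesz on compacts → O6
    intro hriesz a' a b c ha' habc
    obtain ⟨ta, htac, ha'ta, htaa⟩ := cu_exists_compact_between halg ha'
    obtain ⟨g, hg, hgc, hgl⟩ := halg b
    obtain ⟨y, hy, hyc, hyl⟩ := halg c
    have hmono : Monotone fun n => g n + y n := fun i j hij =>
      cu_add_le_add hS (hg hij) (hy hij)
    have hlub : IsLUB (Set.range fun n => g n + y n) (b + c) := hS.O4 g y hg hy b c hgl hyl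
    obtain ⟨k, hk⟩ := htac (fun n => g n + y n) hmono (b + c) hlub (htaa.trans habc)
    obtain ⟨b'', c'', hbc'', hcc'', heq, hble, hcle⟩ :=
      hriesz ta (g k) (y k) htac (hgc k) (hyc k) hk
    refine ⟨b'', c'', ha'ta.trans heq.le, ?_, hble.trans (hgl.1 ⟨k, rfl⟩), ?_,
      hcle.trans (hyl.1 ⟨k, rfl⟩)⟩
    · exact (cu_le_add_right hS b'' c'').trans (heq.ge.trans htaa)
    · exact (cu_le_add_left hS c'' b'').trans (heq.ge.trans htaa)
  · -- O5 ∧ O6 ∧ weak cancel → Riesz on compacts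
    rintro ⟨hO5, hO6, hwc⟩ a b c ha hb hc habc
    obtain ⟨e, f, hae, hea, heb, hfa, hfc⟩ := hO6 a a b c ha habc
    obtain ⟨g, hg, hgc, hgl⟩ := halg e
    obtain ⟨y, hy, hyc, hyl⟩ := halg f
    have hmono : Monotone fun n => g n + y n := fun i j hij =>
      cu_add_le_add hS (hg hij) (hy hij)
    have hlub : IsLUB (Set.range fun n => g n + y n) (e + f) := hS.O4 g y hg hy e f hgl hyl
    obtain ⟨k, hk⟩ := ha (fun n => g n + y n) hmono (e + f) hlub hae
    have hgka : g k ≤ a := (hgl.1 ⟨k, rfl⟩).trans hea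
    obtain ⟨d, hd, hdeq⟩ := cu_algOrder_of_O5 hS halg hO5 (g k) a (hgc k) ha hgka
    have hdyk : d ≤ y k := by
      have h1 : d + g k ≤ y k + g k := by
        calc d + g k = g k + d := add_comm _ _
          _ = a := hdeq
          _ ≤ g k + y k := hk
          _ = y k + g k := add_comm _ _
      exact cuwb_le (hwc d (y k) (g k)
        (cuwb_mono le_rfl (hS.O3 _ _ _ _ hd (hgc k)) h1))
    exact ⟨g k, d, hgc k, hd, hdeq.symm, (hgl.1 ⟨k, rfl⟩).trans heb,
      hdyk.trans ((hyl.1 ⟨k, rfl⟩).trans hfc)⟩
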